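/- arXiv:2411.08179 — 4 statements merged into one kernel-verified Lean document; each statement's English description precedes it below -/
import Mathlib

section
/- For every real β with 0 < β and every x ∈ ℝ, define h(x) = −(1−β²)·e^x / ((β·e^x + 1)·(e^x + β)). Then |h(x)| ≤ |1−β| / (1+β) for all x ∈ ℝ. -/
-- The gap is `β (t - 1)²`; this is `t⁻¹ + t ≥ 2` multiplied out.
lemma sq_one_add_mul_le_mul_add (β t : ℝ) (hβ : 0 ≤ β) :
    (1 + β) ^ 2 * t ≤ (β * t + 1) * (t + β) := by
  nlinarith [mul_nonneg hβ (sq_nonneg (t - 1))]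

lemma abs_one_sub_sq_mul_div_le {β t : ℝ} (hβ : 0 ≤ β) (ht : 0 < t) :
    |(1 - β ^ 2) * t / ((β * t + 1) * (t + β))| ≤ |1 - β| / (1 + β) := by
  calc |(1 - β ^ 2) * t / ((β * t + 1) * (t + β))|
      = |1 - β| * ((1 + β) * t) / ((β * t + 1) * (t + β)) := by
        rw [abs_div, abs_of_pos (by positivity : 0 < (β * t + 1) * (t + β)),
          show (1 - β ^ 2) * t = (1 - β) * ((1 + β) * t) by ring, abs_mul,
          abs_of_pos (by positivity : 0 < (1 + β) * t)]
    _ ≤ |1 - β| * ((1 + β) * t) / ((1 + β) ^ 2 * t) := by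
        gcongr _ / ?_
        exact sq_one_add_mul_le_mul_add β t hβ
    _ = |1 - β| / (1 + β) := by
        field_simp

/-- For `β > 0` and `h(x) = -(1-β²)eˣ/((βeˣ+1)(eˣ+β))`, one has `|h(x)| ≤ |1-β|/(1+β)`. -/
theorem stmt_7 (β : ℝ) (hβ : 0 < β) (x : ℝ) :
    |(-((1 - β ^ 2) * Real.exp x / ((β * Real.exp x + 1) * (Real.exp x + β))))| ≤
      |1 - β| / (1 + β) := by
  rw [abs_neg]
  exact abs_one_sub_sq_mul_div_le hβ.le (Real.exp_pos x)
end

section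
/- Fix R > 1 and ε ∈ (0,1). Define f(x) = |x−1|/(x+1) on the interval [ (R−1+ε)/(R+1−ε), (R+1−ε)/(R−1+ε) ]. Then sup of f over this interval equals (1−ε)/R, attained at both endpoints. -/
/-! With `c = (1 - ε) / R ∈ [0, 1)` the endpoints are `(1 - c) / (1 + c)` and `(1 + c) / (1 - c)`.
Since `|x - 1| ≤ c (x + 1)` amounts to the two linear inequalities `1 - c ≤ (1 + c) x` and
`(1 - c) x ≤ 1 + c`, the sublevel set `{f ≤ c}` on `x > -1` is exactly this interval, and `f = c`
at its endpoints. -/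

open Set

namespace Ising

variable {x c : ℝ}

theorem abs_sub_one_div_add_one_le_iff (hx : -1 < x) :
    |x - 1| / (x + 1) ≤ c ↔ 1 - c ≤ (1 + c) * x ∧ (1 - c) * x ≤ 1 + c := by
  rw [div_le_iff₀ (by linarith), abs_sub_le_iff]
  constructor <;> rintro ⟨h₁, h₂⟩ <;> constructor <;> linarith

theorem abs_sub_one_div_add_one_le_of_mem_Icc (hc₀ : 0 ≤ c) (hc₁ : c < 1)
    (hx : x ∈ Icc ((1 - c) / (1 + c)) ((1 + c) / (1 - c))) : |x - 1| / (x + 1) ≤ c := by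
  obtain ⟨hlo, hhi⟩ := hx
  rw [div_le_iff₀' (by linarith)] at hlo
  rw [le_div_iff₀' (by linarith)] at hhi
  have hx : -1 < x := by nlinarith
  exact (abs_sub_one_div_add_one_le_iff hx).2 ⟨hlo, hhi⟩

theorem abs_sub_one_div_add_one_of_left_endpoint (hc₀ : 0 ≤ c) :
    |(1 - c) / (1 + c) - 1| / ((1 - c) / (1 + c) + 1) = c := by
  have hpos : 0 < 1 + c := by linarith
  have hnum : (1 - c) / (1 + c) - 1 = -(2 * c / (1 + c)) := by field_simp; ring
  have hden : (1 - c) / (1 + c) + 1 = 2 / (1 + c) := by field_simp; ring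
  rw [hnum, hden, abs_neg, abs_of_nonneg (by positivity)]
  field_simp

theorem abs_sub_one_div_add_one_of_right_endpoint (hc₀ : 0 ≤ c) (hc₁ : c < 1) :
    |(1 + c) / (1 - c) - 1| / ((1 + c) / (1 - c) + 1) = c := by
  have hpos : 0 < 1 - c := by linarith
  have hnum : (1 + c) / (1 - c) - 1 = 2 * c / (1 - c) := by field_simp; ring
  have hden : (1 + c) / (1 - c) + 1 = 2 / (1 - c) := by field_simp; ring
  rw [hnum, hden, abs_of_nonneg (by positivity)]
  field_simp

end Ising

open Ising in
/-- On the Ising uniqueness interval `U(R,ε) = [(R-1+ε)/(R+1-ε), (R+1-ε)/(R-1+ε)]`, the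
function `f(x) = |x-1|/(x+1)` attains its supremum `(1-ε)/R` at both endpoints. -/
theorem stmt_8 (R ε : ℝ) (hR : 1 < R) (hε : ε ∈ Set.Ioo (0:ℝ) 1) :
    let a := (R - 1 + ε) / (R + 1 - ε)
    let b := (R + 1 - ε) / (R - 1 + ε)
    let f : ℝ → ℝ := fun x => |x - 1| / (x + 1)
    f a = (1 - ε) / R ∧ f b = (1 - ε) / R ∧ ∀ x ∈ Set.Icc a b, f x ≤ (1 - ε) / R := by
  intro a b f
  obtain ⟨hε₀, hε₁⟩ := hε
  have hR₀ : R ≠ 0 := (zero_lt_one.trans hR).ne'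
  set c := (1 - ε) / R
  have hc₀ : 0 ≤ c := div_nonneg (by linarith) (by linarith)
  have hc₁ : c < 1 := (div_lt_one (by linarith)).2 (by linarith)
  have hminus : 1 - c = (R - 1 + ε) / R := by simp only [c]; field_simp; ring
  have hplus : 1 + c = (R + 1 - ε) / R := by simp only [c]; field_simp; ring
  have ha : a = (1 - c) / (1 + c) := by rw [hminus, hplus, div_div_div_cancel_right₀ hR₀]
  have hb : b = (1 + c) / (1 - c) := by rw [hminus, hplus, div_div_div_cancel_right₀ hR₀]
  refine ⟨?_, ?_, fun x hx => ?_⟩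
  · simpa only [f, ha] using abs_sub_one_div_add_one_of_left_endpoint hc₀
  · simpa only [f, hb] using abs_sub_one_div_add_one_of_right_endpoint hc₀ hc₁
  · rw [ha, hb] at hx
    exact abs_sub_one_div_add_one_le_of_mem_Icc hc₀ hc₁ hx
end

section
/- For λ > 0, define h(x) = −e^x/(e^x+1) and χ(y) = √(e^y/(1+e^y)) for y ∈ ℝ. Let J = (−∞, log λ). Then max over y₁, y₂ ∈ J of χ(y₂)·|h(y₁)|/χ(y₁) equals √( (λ/(1+λ))² ) = λ/(1+λ), i.e. sup_{y₁,y₂ ∈ J} χ(y₂)·|h(y₁)|/χ(y₁) ≤ λ/(1+λ). -/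
/-! Since `|h| = χ²`, the quantity equals `χ(y₁) χ(y₂)`, the geometric mean of `g(y₁)` and
`g(y₂)` for `g(x) = eˣ/(1 + eˣ)`; and `g(y) ≤ λ/(1 + λ)` on `J` because `t ↦ t/(1 + t)` is
increasing on `[0, ∞)` and `eʸ < λ` there. -/

open Real

lemma div_one_add_le_div_one_add {x y : ℝ} (hx : 0 ≤ x) (hxy : x ≤ y) :
    x / (1 + x) ≤ y / (1 + y) := by
  rw [div_le_div_iff₀ (by linarith) (by linarith)]
  linarith

lemma sqrt_mul_sqrt_le_of_le {p q r : ℝ} (hp : 0 ≤ p) (hpr : p ≤ r) (hqr : q ≤ r) :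
    √p * √q ≤ r :=
  calc √p * √q ≤ √r * √r := mul_le_mul (sqrt_le_sqrt hpr) (sqrt_le_sqrt hqr)
        (sqrt_nonneg q) (sqrt_nonneg r)
    _ = r := mul_self_sqrt (hp.trans hpr)

lemma exp_div_one_add_exp_le_of_lt_log {lam y : ℝ} (hlam : 0 < lam) (hy : y < log lam) :
    exp y / (1 + exp y) ≤ lam / (1 + lam) :=
  div_one_add_le_div_one_add (exp_nonneg y) ((lt_log_iff_exp_lt hlam).1 hy).le

/-- For `h(y) = -e^y/(e^y+1)`, `χ(y) = √(e^y/(1+e^y))` and `J = (-∞, log λ)`, the quantity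
`χ(y₂)|h(y₁)|/χ(y₁)` is at most `λ/(1+λ)` for all `y₁, y₂ ∈ J`. -/
theorem stmt_11 (lam : ℝ) (hlam : 0 < lam) :
    ∀ y₁ ∈ Set.Iio (Real.log lam), ∀ y₂ ∈ Set.Iio (Real.log lam),
      Real.sqrt (Real.exp y₂ / (1 + Real.exp y₂)) *
          |(-(Real.exp y₁ / (Real.exp y₁ + 1)))| /
          Real.sqrt (Real.exp y₁ / (1 + Real.exp y₁)) ≤ lam / (1 + lam) := by
  intro y₁ hy₁ y₂ hy₂
  rw [abs_neg, abs_of_nonneg (by positivity), add_comm (exp y₁) 1, mul_div_assoc, div_sqrt]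
  exact sqrt_mul_sqrt_le_of_le (by positivity)
    (exp_div_one_add_exp_le_of_lt_log hlam hy₂) (exp_div_one_add_exp_le_of_lt_log hlam hy₁)
end

section
/- For ε ∈ (0,1) and R ≥ 2, let λ_c(R) = R^R/(R−1)^{R+1} and let Δ_c(λ) be the inverse function of λ_c (i.e. the unique z > 1 with z^z/(z−1)^{z+1} = λ). Then for any 0 < λ < (1−ε)·λ_c(R), there exists z ∈ (0,1) depending only on ε such that (1−z)/R ≥ 1/Δ_c(λ) and λ/(1+λ) < e³/R. -/
/-!
Write `λ_c(x) = x^x / (x-1)^(x+1) = exp (g x - 2 log (x - 1))` with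
`g x = x log x - (x-1) log (x-1)`. Since `0 < g' x = log (x / (x-1)) ≤ 1/(x-1)`, the function
`λ_c` is strictly decreasing while `(x-1)^2 λ_c(x) = exp (g x)` is increasing. The latter gives
`λ_c(R / (1-z)) ≥ ((1-z)/(1+z))^2 λ_c(R) ≥ (1 - 4z) λ_c(R)` for `R ≥ 2`, so with `z = ε/4` we get
`λ_c(Δ_c(λ)) = λ < λ_c(R / (1-z))`, i.e. `Δ_c(λ) > R / (1-z)`. The bound `g' ≤ 1/(x-1)` also gives
`λ_c(R) ≤ e^2 / (R-1) ≤ e^3 / R`.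
-/

open Real Set

noncomputable def critFugacity (x : ℝ) : ℝ := x ^ x / (x - 1) ^ (x + 1)

lemma hasDerivAt_mul_log_sub_mul_log_sub_one {x : ℝ} (hx : 1 < x) :
    HasDerivAt (fun x => x * log x - (x - 1) * log (x - 1)) (log x - log (x - 1)) x := by
  have hx0 : x ≠ 0 := by positivity
  have hx1 : x - 1 ≠ 0 := sub_ne_zero.mpr hx.ne'
  have h := (hasDerivAt_mul_log hx0).sub
    ((hasDerivAt_mul_log hx1).comp x ((hasDerivAt_id x).sub_const 1))
  exact h.congr_deriv (by ring)

lemma log_sub_log_sub_one_pos {x : ℝ} (hx : 1 < x) : 0 < log x - log (x - 1) :=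
  sub_pos.mpr (log_lt_log (by linarith) (by linarith))

lemma log_sub_log_sub_one_le {x : ℝ} (hx : 1 < x) : log x - log (x - 1) ≤ 1 / (x - 1) := by
  have hx1 : 0 < x - 1 := by linarith
  rw [← log_div (by linarith) hx1.ne']
  calc log (x / (x - 1)) ≤ x / (x - 1) - 1 := log_le_sub_one_of_pos (by positivity)
    _ = 1 / (x - 1) := by field_simp; ring

lemma critFugacity_eq_exp {x : ℝ} (hx : 1 < x) :
    critFugacity x = exp (x * log x - (x - 1) * log (x - 1) - 2 * log (x - 1)) := by
  rw [critFugacity, rpow_def_of_pos (by linarith), rpow_def_of_pos (by linarith), ← exp_sub]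
  ring_nf

lemma strictAntiOn_critFugacity : StrictAntiOn critFugacity (Ioi 1) := by
  have hf : StrictAntiOn (fun x => x * log x - (x - 1) * log (x - 1) - 2 * log (x - 1))
      (Ioi 1) := by
    have hderiv : ∀ x ∈ Ioi (1 : ℝ), HasDerivAt
        (fun x => x * log x - (x - 1) * log (x - 1) - 2 * log (x - 1))
        (log x - log (x - 1) - 2 * (1 / (x - 1))) x := fun x hx =>
      (hasDerivAt_mul_log_sub_mul_log_sub_one hx).sub
        ((((hasDerivAt_id x).sub_const 1).log (sub_ne_zero.mpr (ne_of_gt hx))).const_mul 2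
          |>.congr_deriv (by simp [div_eq_mul_inv]))
    refine strictAntiOn_of_deriv_neg (convex_Ioi 1)
      (fun x hx => (hderiv x hx).continuousAt.continuousWithinAt) fun x hx => ?_
    rw [interior_Ioi] at hx
    have hx1 : 0 < x - 1 := sub_pos.mpr hx
    rw [(hderiv x hx).deriv]
    linarith [log_sub_log_sub_one_le hx, one_div_pos.mpr hx1]
  intro x hx y hy hxy
  rw [critFugacity_eq_exp hx, critFugacity_eq_exp hy]
  exact exp_lt_exp.mpr (hf hx hy hxy)

lemma monotoneOn_sq_mul_critFugacity :
    MonotoneOn (fun x => (x - 1) ^ 2 * critFugacity x) (Ioi 1) := by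
  have hg : MonotoneOn (fun x => x * log x - (x - 1) * log (x - 1)) (Ioi 1) := by
    refine monotoneOn_of_deriv_nonneg (convex_Ioi 1)
      (fun x hx => (hasDerivAt_mul_log_sub_mul_log_sub_one hx).continuousAt.continuousWithinAt)
      (fun x hx => ?_) fun x hx => ?_ <;> rw [interior_Ioi] at hx
    · exact (hasDerivAt_mul_log_sub_mul_log_sub_one hx).differentiableAt.differentiableWithinAt
    · rw [(hasDerivAt_mul_log_sub_mul_log_sub_one hx).deriv]
      exact (log_sub_log_sub_one_pos hx).le
  have hsq : ∀ x ∈ Ioi (1 : ℝ), (x - 1) ^ 2 * critFugacity x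
      = exp (x * log x - (x - 1) * log (x - 1)) := fun x hx => by
    have hx1 : (0 : ℝ) < x - 1 := sub_pos.mpr hx
    rw [critFugacity_eq_exp hx, exp_sub, show 2 * log (x - 1) = log ((x - 1) ^ 2) by
      rw [log_pow]; norm_num, exp_log (by positivity)]
    field_simp
  intro x hx y hy hxy
  simp only [hsq x hx, hsq y hy]
  exact exp_le_exp.mpr (hg hx hy hxy)

lemma one_sub_four_mul_critFugacity_le {R z : ℝ} (hR : 2 ≤ R) (hz : z ∈ Ioo (0 : ℝ) 1) :
    (1 - 4 * z) * critFugacity R ≤ critFugacity (R / (1 - z)) := by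
  obtain ⟨hz0, hz1⟩ := hz
  have h1z : 0 < 1 - z := by linarith
  have hRR' : R ≤ R / (1 - z) := by
    rw [le_div_iff₀ h1z]; nlinarith
  have hR' : (R / (1 - z) - 1) * (1 - z) = R - 1 + z := by field_simp; ring
  have hpos : 0 < critFugacity R := by
    rw [critFugacity_eq_exp (by linarith)]; positivity
  have hmono := monotoneOn_sq_mul_critFugacity (show (1 : ℝ) < R by linarith)
    (mem_Ioi.mpr (by linarith)) hRR'
  -- with `a = R - 1 ≥ 1` the difference is `z (2a(a-1) + z(a^2-1) + 8az + 4z^2)`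
  have hfactor : (1 - 4 * z) * (R - 1 + z) ^ 2 ≤ (1 - z) ^ 2 * (R - 1) ^ 2 := by
    nlinarith [mul_pos hz0 hz0, mul_nonneg (mul_nonneg hz0.le hz0.le) (by linarith : (0:ℝ) ≤ R - 2),
      mul_nonneg hz0.le (by linarith : (0:ℝ) ≤ R - 2),
      mul_nonneg (mul_nonneg hz0.le (by linarith : (0:ℝ) ≤ R - 2)) (by linarith : (0:ℝ) ≤ R - 1)]
  have hsq_pos : 0 < (R / (1 - z) - 1) ^ 2 := by
    have : 0 < R / (1 - z) - 1 := by linarith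
    positivity
  rw [← mul_le_mul_iff_of_pos_left hsq_pos]
  calc (R / (1 - z) - 1) ^ 2 * ((1 - 4 * z) * critFugacity R)
      = (1 - 4 * z) * (R - 1 + z) ^ 2 / (1 - z) ^ 2 * critFugacity R := by
        rw [← hR']; field_simp
    _ ≤ (R - 1) ^ 2 * critFugacity R := by
        gcongr
        rw [div_le_iff₀ (by positivity)]; linarith
    _ ≤ _ := hmono

lemma critFugacity_le_exp_three_div {R : ℝ} (hR : 2 ≤ R) : critFugacity R ≤ exp 3 / R := by
  have hR1 : 0 < R - 1 := by linarith
  have hexp : R * (log R - log (R - 1)) - log (R - 1) ≤ 2 - log (R - 1) := by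
    have := mul_le_mul_of_nonneg_left (log_sub_log_sub_one_le (by linarith : (1:ℝ) < R))
      (by linarith : (0:ℝ) ≤ R)
    have hfrac : R * (1 / (R - 1)) ≤ 2 := by
      rw [mul_one_div, div_le_iff₀ hR1]; linarith
    linarith
  have he : 2 ≤ exp 1 := by linarith [add_one_le_exp (1 : ℝ)]
  calc critFugacity R = exp (R * (log R - log (R - 1)) - log (R - 1)) := by
        rw [critFugacity_eq_exp (by linarith)]; ring_nf
    _ ≤ exp (2 - log (R - 1)) := exp_le_exp.mpr hexp
    _ = exp 2 / (R - 1) := by rw [exp_sub, exp_log hR1]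
    _ ≤ exp 2 * exp 1 / R := by
        rw [div_le_div_iff₀ hR1 (by linarith)]
        have : R ≤ exp 1 * (R - 1) := by nlinarith
        nlinarith [exp_pos 2]
    _ = exp 3 / R := by rw [← exp_add]; norm_num

/-- For `ε ∈ (0,1)`, `R ≥ 2` and `0 < λ < (1-ε)λ_c(R)`, with `Δ_c(λ)` the unique `z > 1`
satisfying `z^z/(z-1)^{z+1} = λ`, there is `z ∈ (0,1)` depending only on `ε` such that
`(1-z)/R ≥ 1/Δ_c(λ)` and `λ/(1+λ) < e³/R`. -/
theorem stmt_12 : ∀ ε ∈ Set.Ioo (0:ℝ) 1, ∃ z ∈ Set.Ioo (0:ℝ) 1,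
    ∀ R : ℝ, 2 ≤ R → ∀ lam : ℝ, 0 < lam →
      lam < (1 - ε) * (R ^ R / (R - 1) ^ (R + 1)) →
      ∀ Δc : ℝ, 1 < Δc → Δc ^ Δc / (Δc - 1) ^ (Δc + 1) = lam →
        (1 - z) / R ≥ 1 / Δc ∧ lam / (1 + lam) < Real.exp 3 / R := by
  rintro ε ⟨hε0, hε1⟩
  have hz : ε / 4 ∈ Ioo (0 : ℝ) 1 := ⟨by linarith, by linarith⟩
  refine ⟨ε / 4, hz, fun R hR lam hlam hlt Δc hΔc hΔlam => ?_⟩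
  change lam < (1 - ε) * critFugacity R at hlt
  change critFugacity Δc = lam at hΔlam
  have hR' : 1 < R / (1 - ε / 4) := by
    rw [lt_div_iff₀ (by linarith)]; nlinarith
  have hR'_lt : R / (1 - ε / 4) < Δc := by
    have hle := one_sub_four_mul_critFugacity_le hR hz
    rw [mul_div_cancel₀ ε four_ne_zero] at hle
    by_contra! h
    have := strictAntiOn_critFugacity.antitoneOn (mem_Ioi.mpr hΔc) (mem_Ioi.mpr hR') h
    linarith
  have hlam_lt : lam < critFugacity R := by nlinarith
  refine ⟨?_, ?_⟩
  · rw [div_lt_iff₀ (by linarith)] at hR'_lt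
    rw [ge_iff_le, div_le_div_iff₀ (by linarith) (by linarith)]
    linarith
  · calc lam / (1 + lam) < lam := div_lt_self hlam (by linarith)
      _ < critFugacity R := hlam_lt
      _ ≤ exp 3 / R := critFugacity_le_exp_three_div hR
end
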